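/- arXiv:1810.02194 — 3 statements merged into one kernel-verified Lean document; each statement's English description precedes it below -/
import Mathlib

section
/- Every quantitative MPRS game has a Nash equilibrium in deterministic memoryless strategies: there exists a memoryless deterministic strategy profile σ̂ = (σ̂^1,...,σ̂^N) such that for every player n ∈ {1,...,N}, every initial state s₀ ∈ S, and every (possibly history-dependent) deterministic strategy σ^n of player n, Q^n(s₀, σ̂^n, σ̂^{-n}) ≥ Q^n(s₀, σ^n, σ̂^{-n}). -/
/-- A multi-player reachability/safety (MPRS) game on a finite vertex type `V`
with `N` players.  `succ v` is the (nonempty) set of out-neighbours of `v`,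
`owner v` is the player who moves at `v` (the partition `V = V₁ ∪ ... ∪ V_N`),
`target n` is player `n`'s nonempty target set `R_n`, `reacher n` tells whether
player `n` is a reacher (`true`) or an avoider (`false`), and `gamma` is the
discount factor. -/
structure MPRS (V : Type) [Fintype V] [DecidableEq V] (N : ℕ) where
  succ : V → Finset V
  succ_nonempty : ∀ v, (succ v).Nonempty
  owner : V → Fin N
  target : Fin N → Finset V
  target_nonempty : ∀ n, (target n).Nonempty
  reacher : Fin N → Bool
  gamma : ℝ
  gamma_pos : 0 < gamma
  gamma_lt_one : gamma < 1

namespace MPRS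

/-- A deterministic, possibly history-dependent strategy: given the list of past
states and the current vertex, choose a next vertex.  (`none` is the terminal
state `s̄`; a strategy is only ever consulted at non-target vertices owned by
the player, where it must choose an out-neighbour.) -/
abbrev Strat (V : Type) := List (Option V) → V → V

/-- A strategy is memoryless if it depends only on the current state. -/
def Memoryless {V : Type} (σ : Strat V) : Prop := ∀ h h' v, σ h v = σ h' v

variable {V : Type} [Fintype V] [DecidableEq V] {N : ℕ} (g : MPRS V N)

/-- The total target set `R = R₁ ∪ ... ∪ R_N`. -/
def totalTarget : Finset V := Finset.univ.biUnion g.target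

/-- Validity of a strategy for player `n`: at any history ending in a vertex
`v ∈ V_n \ R`, it chooses an out-neighbour of `v`. -/
def ValidStrat (n : Fin N) (σ : Strat V) : Prop :=
  ∀ (h : List (Option V)) (v : V), g.owner v = n → v ∉ g.totalTarget → σ h v ∈ g.succ v

/-- One step of the deterministic dynamics under profile `σ`, given past
history `h` and current state `s`.  From a target or terminal state the next
state is the terminal state `none`. -/
def step (σ : Fin N → Strat V) (h : List (Option V)) (s : Option V) : Option V :=
  match s with
  | none => none
  | some v => if v ∈ g.totalTarget then none else some (σ (g.owner v) h v)

/-- Auxiliary play function carrying the history. -/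
def playAux (g : MPRS V N) (σ : Fin N → Strat V) : ℕ → List (Option V) → Option V → Option V
  | 0, _, s => s
  | t + 1, h, s => playAux g σ t (h ++ [s]) (g.step σ h s)

/-- The induced play: `play σ s₀ t` is the state `s_t` of the unique play
determined by the profile `σ` and the initial state `s₀`. -/
def play (σ : Fin N → Strat V) (s₀ : Option V) (t : ℕ) : Option V :=
  g.playAux σ t [] s₀

/-- Player `n`'s turn payoff `q^n`. -/
def q (n : Fin N) : Option V → ℝ
  | none => 0
  | some v => if v ∈ g.target n then (if g.reacher n then 1 else -1) else 0

/-- Player `n`'s total quantitative payoff `Q^n(s₀, σ) = ∑ γ^t q^n(s_t)`. -/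
noncomputable def Q (n : Fin N) (s₀ : Option V) (σ : Fin N → Strat V) : ℝ :=
  ∑' t : ℕ, g.gamma ^ t * g.q n (g.play σ s₀ t)

/-- Player `n`'s qualitative payoff `Q̃^n(s₀, σ)`. -/
noncomputable def Qtil (n : Fin N) (s₀ : Option V) (σ : Fin N → Strat V) : ℝ :=
  if 0 < g.Q n s₀ σ then 1 else if g.Q n s₀ σ < 0 then -1 else 0

end MPRS

/-!
Solve the game backwards from the targets. Round `0` labels each target vertex with itself at
time `0`. In round `r + 1` an unlabelled vertex takes a move to a successor labelled in round `r`
whose destination is favourable to the owner (its own target for a reacher, anything else for an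
avoider) if there is one; otherwise it is labelled through such a successor only once all of its
successors are labelled, so an unfavourable destination is reached as late as possible. Vertices
that are never labelled can keep the play among unlabelled vertices forever, which is optimal for
their owner because every labelled successor leads to an unfavourable destination.

Following the labels is a memoryless profile whose payoff from a vertex labelled with destination
`e` and time `t` is `γ ^ t * q n e` (and `0` from an unlabelled one). This value satisfies the
Bellman equation of the profile and the Bellman inequality of every unilateral deviation, and
discounted telescoping turns these into the payoff of the profile, resp. an upper bound on the
payoff of the deviation.
-/

open Filter Topology

theorem tsum_pow_mul_le_of_forall_add_mul_le {γ : ℝ} (hγ : 0 ≤ γ) {a w : ℕ → ℝ}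
    (ha : Summable fun t => γ ^ t * a t) (hw : Tendsto (fun t => γ ^ t * w t) atTop (𝓝 0))
    (h : ∀ t, a t + γ * w (t + 1) ≤ w t) : ∑' t, γ ^ t * a t ≤ w 0 := by
  have partial_le : ∀ k, ∑ t ∈ Finset.range k, γ ^ t * a t + γ ^ k * w k ≤ w 0 := by
    intro k
    induction k with
    | zero => simp
    | succ k ih =>
      have := mul_le_mul_of_nonneg_left (h k) (pow_nonneg hγ k)
      rw [Finset.sum_range_succ]
      linarith [show γ ^ (k + 1) * w (k + 1) = γ ^ k * (γ * w (k + 1)) by ring]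
  refine le_of_tendsto_of_tendsto' ha.tendsto_sum_tsum_nat
    (by simpa using hw.const_sub (w 0)) fun k => ?_
  linarith [partial_le k]

theorem tsum_pow_mul_eq_of_forall_add_mul_eq {γ : ℝ} (hγ : 0 ≤ γ) {a w : ℕ → ℝ}
    (ha : Summable fun t => γ ^ t * a t) (hw : Tendsto (fun t => γ ^ t * w t) atTop (𝓝 0))
    (h : ∀ t, a t + γ * w (t + 1) = w t) : ∑' t, γ ^ t * a t = w 0 := by
  refine le_antisymm (tsum_pow_mul_le_of_forall_add_mul_le hγ ha hw fun t => (h t).le) ?_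
  have := tsum_pow_mul_le_of_forall_add_mul_le hγ (a := -a) (w := -w)
    (by simpa using ha.neg) (by simpa using hw.neg) fun t => by
      simp only [Pi.neg_apply]; linarith [h t]
  simp only [Pi.neg_apply, mul_neg, tsum_neg] at this
  linarith

namespace MPRS

variable {V : Type} [Fintype V] [DecidableEq V] {N : ℕ} (g : MPRS V N)

theorem exists_play_succ_eq_step (σ : Fin N → Strat V) (s₀ : Option V) (t : ℕ) :
    ∃ hist, g.play σ s₀ (t + 1) = g.step σ hist (g.play σ s₀ t) := by
  suffices ∀ t hist s,
      ∃ hist', g.playAux σ (t + 1) hist s = g.step σ hist' (g.playAux σ t hist s) from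
    this t [] s₀
  intro t
  induction t with
  | zero => exact fun hist s => ⟨hist, rfl⟩
  | succ t ih => exact fun hist s => ih (hist ++ [s]) (g.step σ hist s)

theorem summable_pow_mul_play (f : Option V → ℝ) (σ : Fin N → Strat V) (s₀ : Option V) :
    Summable fun t => g.gamma ^ t * f (g.play σ s₀ t) := by
  obtain ⟨C, hC⟩ := Finite.exists_le fun s => ‖f s‖
  refine .of_norm_bounded
    ((summable_geometric_of_lt_one g.gamma_pos.le g.gamma_lt_one).mul_right C) fun t => ?_
  rw [norm_mul, norm_pow, Real.norm_of_nonneg g.gamma_pos.le]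
  exact mul_le_mul_of_nonneg_left (hC _) (pow_nonneg g.gamma_pos.le t)

variable {g}

theorem step_of_mem_totalTarget {σ : Fin N → Strat V} {hist : List (Option V)} {v : V}
    (hv : v ∈ g.totalTarget) : g.step σ hist (some v) = none := by
  simp [step, hv]

theorem step_of_not_mem_totalTarget {σ : Fin N → Strat V} {hist : List (Option V)} {v : V}
    (hv : v ∉ g.totalTarget) : g.step σ hist (some v) = some (σ (g.owner v) hist v) := by
  simp [step, hv]

theorem Q_le_of_forall_add_mul_le {σ : Fin N → Strat V} {n : Fin N} {W : Option V → ℝ}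
    (h : ∀ hist s, g.q n s + g.gamma * W (g.step σ hist s) ≤ W s) (s₀ : Option V) :
    g.Q n s₀ σ ≤ W s₀ :=
  tsum_pow_mul_le_of_forall_add_mul_le g.gamma_pos.le (g.summable_pow_mul_play _ σ s₀)
    (g.summable_pow_mul_play W σ s₀).tendsto_atTop_zero fun t => by
      obtain ⟨hist, hplay⟩ := g.exists_play_succ_eq_step σ s₀ t
      rw [hplay]
      exact h hist _

theorem Q_eq_of_forall_add_mul_eq {σ : Fin N → Strat V} {n : Fin N} {W : Option V → ℝ}
    (h : ∀ hist s, g.q n s + g.gamma * W (g.step σ hist s) = W s) (s₀ : Option V) :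
    g.Q n s₀ σ = W s₀ :=
  tsum_pow_mul_eq_of_forall_add_mul_eq g.gamma_pos.le (g.summable_pow_mul_play _ σ s₀)
    (g.summable_pow_mul_play W σ s₀).tendsto_atTop_zero fun t => by
      obtain ⟨hist, hplay⟩ := g.exists_play_succ_eq_step σ s₀ t
      rw [hplay]
      exact h hist _

variable (g)

def Favorable (n : Fin N) (e : V) : Prop := e ∈ g.target n ↔ g.reacher n = true

theorem q_eq_zero_of_not_mem_totalTarget {v : V} (hv : v ∉ g.totalTarget) (n : Fin N) :
    g.q n (some v) = 0 := by
  have : v ∉ g.target n := fun h => hv (Finset.mem_biUnion.mpr ⟨n, Finset.mem_univ n, h⟩)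
  simp [q, this]

theorem q_eq_of_favorable_iff {n : Fin N} {e e' : V} (h : g.Favorable n e ↔ g.Favorable n e') :
    g.q n (some e) = g.q n (some e') := by
  unfold Favorable at h
  by_cases he : e ∈ g.target n <;> by_cases he' : e' ∈ g.target n <;> simp_all [q]

theorem q_nonneg_of_favorable {n : Fin N} {e : V} (h : g.Favorable n e) :
    0 ≤ g.q n (some e) := by
  unfold Favorable at h
  by_cases he : e ∈ g.target n <;> simp_all [q]

theorem q_nonpos_of_not_favorable {n : Fin N} {e : V} (h : ¬ g.Favorable n e) :
    g.q n (some e) ≤ 0 := by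
  unfold Favorable at h
  by_cases he : e ∈ g.target n <;> simp_all [q]

/-- `L v = some ⟨u, e, t⟩` says that from `v` the play moves to `u` and first enters `R` at `e`
at time `t`; `L v = none` says that it never enters `R`. -/
structure Label (V : Type) where
  next : V
  dest : V
  time : ℕ

/-- Local conditions on a labelling under which following it is a Nash equilibrium with payoffs
`labelValue`. -/
structure IsEquilibriumLabelling (L : V → Option (Label V)) : Prop where
  eq_of_mem_totalTarget : ∀ {v}, v ∈ g.totalTarget → L v = some ⟨v, v, 0⟩
  next_mem : ∀ {v l}, v ∉ g.totalTarget → L v = some l → l.next ∈ g.succ v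
  next_label : ∀ {v l}, v ∉ g.totalTarget → L v = some l →
    ∃ l', L l.next = some l' ∧ l'.dest = l.dest ∧ l'.time + 1 = l.time
  favorable_of_succ : ∀ {v u lu}, v ∉ g.totalTarget → u ∈ g.succ v → L u = some lu →
    g.Favorable (g.owner v) lu.dest →
    ∃ l, L v = some l ∧ g.Favorable (g.owner v) l.dest ∧ l.time ≤ lu.time + 1
  succ_time_lt : ∀ {v l}, v ∉ g.totalTarget → L v = some l →
    ¬ g.Favorable (g.owner v) l.dest →
    ∀ u ∈ g.succ v, ∃ lu, L u = some lu ∧ lu.time < l.time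
  exists_succ_eq_none : ∀ {v}, L v = none → ∃ u ∈ g.succ v, L u = none

noncomputable def labelMove (L : V → Option (Label V)) (v : V) : V :=
  match L v with
  | some l => l.next
  | none => if h : ∃ u ∈ g.succ v, L u = none then h.choose else v

noncomputable def labelProfile (L : V → Option (Label V)) : Fin N → Strat V :=
  fun _ _ => g.labelMove L

noncomputable def labelValue (L : V → Option (Label V)) (n : Fin N) : Option V → ℝ
  | none => 0
  | some v =>
    match L v with
    | none => 0
    | some l => g.gamma ^ l.time * g.q n (some l.dest)

variable {g} {L : V → Option (Label V)}

theorem labelValue_of_eq_none {n : Fin N} {v : V} (h : L v = none) :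
    g.labelValue L n (some v) = 0 := by
  simp [labelValue, h]

theorem labelValue_of_eq_some {n : Fin N} {v : V} {l : Label V} (h : L v = some l) :
    g.labelValue L n (some v) = g.gamma ^ l.time * g.q n (some l.dest) := by
  simp [labelValue, h]

namespace IsEquilibriumLabelling

theorem labelMove_mem (hL : g.IsEquilibriumLabelling L) {v : V} (hv : v ∉ g.totalTarget) :
    g.labelMove L v ∈ g.succ v := by
  rcases hLv : L v with _ | l
  · have h := hL.exists_succ_eq_none hLv
    simpa [labelMove, hLv, h] using h.choose_spec.1
  · simpa [labelMove, hLv] using hL.next_mem hv hLv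

theorem labelMove_eq_none (hL : g.IsEquilibriumLabelling L) {v : V} (hLv : L v = none) :
    L (g.labelMove L v) = none := by
  have h := hL.exists_succ_eq_none hLv
  simpa [labelMove, hLv, h] using h.choose_spec.2

theorem labelValue_of_mem_totalTarget (hL : g.IsEquilibriumLabelling L) {n : Fin N} {v : V}
    (hv : v ∈ g.totalTarget) :
    g.labelValue L n (some v) = g.q n (some v) := by
  simp [labelValue_of_eq_some (hL.eq_of_mem_totalTarget hv)]

theorem mul_labelValue_labelMove (hL : g.IsEquilibriumLabelling L) {n : Fin N} {v : V}
    (hv : v ∉ g.totalTarget) :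
    g.gamma * g.labelValue L n (some (g.labelMove L v)) = g.labelValue L n (some v) := by
  rcases hLv : L v with _ | l
  · rw [labelValue_of_eq_none (hL.labelMove_eq_none hLv), labelValue_of_eq_none hLv, mul_zero]
  · obtain ⟨l', hl', hdest, htime⟩ := hL.next_label hv hLv
    have hmove : g.labelMove L v = l.next := by simp [labelMove, hLv]
    rw [hmove, labelValue_of_eq_some hl', labelValue_of_eq_some hLv, ← htime, hdest, pow_succ]
    ring

theorem not_favorable_of_succ (hL : g.IsEquilibriumLabelling L) {v u : V} {lu : Label V}
    (hv : v ∉ g.totalTarget) (hu : u ∈ g.succ v) (hLu : L u = some lu)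
    (hLv : ∀ l, L v = some l → ¬ g.Favorable (g.owner v) l.dest) :
    ¬ g.Favorable (g.owner v) lu.dest := fun hfav => by
  obtain ⟨l, hl, hlfav, -⟩ := hL.favorable_of_succ hv hu hLu hfav
  exact hLv l hl hlfav

theorem mul_labelValue_succ_le_of_eq_none (hL : g.IsEquilibriumLabelling L) {v u : V}
    (hv : v ∉ g.totalTarget) (hu : u ∈ g.succ v) (hLv : L v = none) :
    g.gamma * g.labelValue L (g.owner v) (some u) ≤ g.labelValue L (g.owner v) (some v) := by
  rw [labelValue_of_eq_none hLv]
  rcases hLu : L u with _ | lu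
  · simp [labelValue_of_eq_none hLu]
  · have hq := g.q_nonpos_of_not_favorable
      (hL.not_favorable_of_succ hv hu hLu fun l hl => by simp [hLv] at hl)
    rw [labelValue_of_eq_some hLu]
    exact mul_nonpos_of_nonneg_of_nonpos g.gamma_pos.le
      (mul_nonpos_of_nonneg_of_nonpos (pow_nonneg g.gamma_pos.le _) hq)

theorem mul_labelValue_succ_le_of_favorable (hL : g.IsEquilibriumLabelling L) {v u : V}
    {l : Label V} (hv : v ∉ g.totalTarget) (hu : u ∈ g.succ v) (hLv : L v = some l)
    (hfav : g.Favorable (g.owner v) l.dest) :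
    g.gamma * g.labelValue L (g.owner v) (some u) ≤ g.labelValue L (g.owner v) (some v) := by
  have hγ := g.gamma_pos
  have hq := g.q_nonneg_of_favorable hfav
  rw [labelValue_of_eq_some hLv]
  have hvalue : 0 ≤ g.gamma ^ l.time * g.q (g.owner v) (some l.dest) := by positivity
  rcases hLu : L u with _ | lu
  · simpa [labelValue_of_eq_none hLu] using hvalue
  rw [labelValue_of_eq_some hLu, ← mul_assoc, ← pow_succ']
  by_cases hufav : g.Favorable (g.owner v) lu.dest
  · obtain ⟨l', hl', -, htime⟩ := hL.favorable_of_succ hv hu hLu hufav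
    obtain rfl : l' = l := Option.some_injective _ (hl'.symm.trans hLv)
    rw [g.q_eq_of_favorable_iff (iff_of_true hufav hfav)]
    exact mul_le_mul_of_nonneg_right (pow_le_pow_of_le_one hγ.le g.gamma_lt_one.le htime) hq
  · exact (mul_nonpos_of_nonneg_of_nonpos (by positivity)
      (g.q_nonpos_of_not_favorable hufav)).trans hvalue

theorem mul_labelValue_succ_le_of_not_favorable (hL : g.IsEquilibriumLabelling L) {v u : V}
    {l : Label V} (hv : v ∉ g.totalTarget) (hu : u ∈ g.succ v) (hLv : L v = some l)
    (hfav : ¬ g.Favorable (g.owner v) l.dest) :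
    g.gamma * g.labelValue L (g.owner v) (some u) ≤ g.labelValue L (g.owner v) (some v) := by
  obtain ⟨lu, hLu, htime⟩ := hL.succ_time_lt hv hLv hfav u hu
  have hufav := hL.not_favorable_of_succ hv hu hLu fun l' hl' => by
    obtain rfl : l' = l := Option.some_injective _ (hl'.symm.trans hLv)
    exact hfav
  rw [labelValue_of_eq_some hLu, labelValue_of_eq_some hLv, ← mul_assoc, ← pow_succ',
    g.q_eq_of_favorable_iff (iff_of_false hufav hfav)]
  exact mul_le_mul_of_nonpos_right
    (pow_le_pow_of_le_one g.gamma_pos.le g.gamma_lt_one.le htime) (g.q_nonpos_of_not_favorable hfav)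

theorem mul_labelValue_succ_le (hL : g.IsEquilibriumLabelling L) {v u : V}
    (hv : v ∉ g.totalTarget) (hu : u ∈ g.succ v) :
    g.gamma * g.labelValue L (g.owner v) (some u) ≤ g.labelValue L (g.owner v) (some v) := by
  rcases hLv : L v with _ | l
  · exact hL.mul_labelValue_succ_le_of_eq_none hv hu hLv
  by_cases hfav : g.Favorable (g.owner v) l.dest
  · exact hL.mul_labelValue_succ_le_of_favorable hv hu hLv hfav
  · exact hL.mul_labelValue_succ_le_of_not_favorable hv hu hLv hfav

theorem add_mul_labelValue_step_eq (hL : g.IsEquilibriumLabelling L) (n : Fin N)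
    (hist : List (Option V)) (s : Option V) :
    g.q n s + g.gamma * g.labelValue L n (g.step (g.labelProfile L) hist s) =
      g.labelValue L n s := by
  rcases s with _ | v
  · simp [step, q, labelValue]
  by_cases hv : v ∈ g.totalTarget
  · rw [step_of_mem_totalTarget hv, hL.labelValue_of_mem_totalTarget hv]
    simp [labelValue]
  · rw [step_of_not_mem_totalTarget hv, g.q_eq_zero_of_not_mem_totalTarget hv, zero_add]
    exact hL.mul_labelValue_labelMove hv

theorem add_mul_labelValue_step_update_le (hL : g.IsEquilibriumLabelling L) {n : Fin N}
    {σn : Strat V} (hσn : g.ValidStrat n σn) (hist : List (Option V)) (s : Option V) :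
    g.q n s + g.gamma * g.labelValue L n (g.step (Function.update (g.labelProfile L) n σn) hist s)
      ≤ g.labelValue L n s := by
  rcases s with _ | v
  · simp [step, q, labelValue]
  by_cases hv : v ∈ g.totalTarget
  · rw [step_of_mem_totalTarget hv, hL.labelValue_of_mem_totalTarget hv]
    simp [labelValue]
  rw [step_of_not_mem_totalTarget hv, g.q_eq_zero_of_not_mem_totalTarget hv, zero_add]
  by_cases hown : g.owner v = n
  · subst hown
    simpa using hL.mul_labelValue_succ_le hv (hσn hist v rfl hv)
  · rw [Function.update_of_ne hown]
    exact (hL.mul_labelValue_labelMove hv).le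

end IsEquilibriumLabelling

variable (g) in
def FreshSucc (L : V → Option (Label V)) (r : ℕ) (v u : V) (l : Label V) : Prop :=
  u ∈ g.succ v ∧ L u = some l ∧ l.time = r

variable (g) in
open Classical in
/-- Round `r + 1`: label `v` through a successor labelled in round `r`, preferably one with a
favourable destination, and otherwise only once all successors are labelled (so that the
unfavourable destination is the latest one available). -/
noncomputable def extendLabelling (r : ℕ) (L : V → Option (Label V)) (v : V) :
    Option (Label V) :=
  match L v with
  | some l => some l
  | none =>
    if h : ∃ u l, g.FreshSucc L r v u l ∧ g.Favorable (g.owner v) l.dest then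
      some ⟨h.choose, h.choose_spec.choose.dest, r + 1⟩
    else if h : (∀ u ∈ g.succ v, (L u).isSome) ∧ ∃ u l, g.FreshSucc L r v u l then
      some ⟨h.2.choose, h.2.choose_spec.choose.dest, r + 1⟩
    else none

variable (g) in
noncomputable def roundLabelling : ℕ → V → Option (Label V)
  | 0 => fun v => if v ∈ g.totalTarget then some ⟨v, v, 0⟩ else none
  | r + 1 => g.extendLabelling r (roundLabelling r)

variable (g) in
open Classical in
noncomputable def finalLabelling (v : V) : Option (Label V) :=
  if h : ∃ r, (g.roundLabelling r v).isSome then g.roundLabelling h.choose v else none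

section

variable {r : ℕ} {v : V} {l : Label V}

theorem extendLabelling_of_eq_some (h : L v = some l) : g.extendLabelling r L v = some l := by
  simp [extendLabelling, h]

theorem extendLabelling_eq_some (hLv : L v = none) (h : g.extendLabelling r L v = some l) :
    l.time = r + 1 ∧ (∃ lu, g.FreshSucc L r v l.next lu ∧ lu.dest = l.dest) ∧
      (g.Favorable (g.owner v) l.dest ∨ ∀ u ∈ g.succ v, (L u).isSome) := by
  simp only [extendLabelling, hLv] at h
  split_ifs at h with hfav hall <;> cases h
  · obtain ⟨hfresh, hfav'⟩ := hfav.choose_spec.choose_spec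
    exact ⟨rfl, ⟨_, hfresh, rfl⟩, .inl hfav'⟩
  · exact ⟨rfl, ⟨_, hall.2.choose_spec.choose_spec, rfl⟩, .inr hall.1⟩

theorem extendLabelling_of_favorable {u : V} {lu : Label V} (hLv : L v = none)
    (hu : g.FreshSucc L r v u lu) (hfav : g.Favorable (g.owner v) lu.dest) :
    ∃ l, g.extendLabelling r L v = some l ∧ g.Favorable (g.owner v) l.dest := by
  have h : ∃ u l, g.FreshSucc L r v u l ∧ g.Favorable (g.owner v) l.dest :=
    ⟨u, lu, hu, hfav⟩
  exact ⟨⟨h.choose, h.choose_spec.choose.dest, r + 1⟩,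
    by simp only [extendLabelling, hLv, dif_pos h],
    h.choose_spec.choose_spec.2⟩

theorem isSome_extendLabelling_of_forall {u : V} {lu : Label V} (hLv : L v = none)
    (hall : ∀ u ∈ g.succ v, (L u).isSome) (hu : g.FreshSucc L r v u lu) :
    (g.extendLabelling r L v).isSome := by
  simp only [extendLabelling, hLv]
  split_ifs with hfav hall'
  · rfl
  · rfl
  · exact (hall' ⟨hall, u, lu, hu⟩).elim

theorem roundLabelling_mono (h : g.roundLabelling r v = some l) {r' : ℕ} (hr : r ≤ r') :
    g.roundLabelling r' v = some l := by
  induction r', hr using Nat.le_induction with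
  | base => exact h
  | succ k _ ih => exact extendLabelling_of_eq_some ih

theorem roundLabelling_time (h : g.roundLabelling r v = some l) :
    l.time ≤ r ∧ g.roundLabelling l.time v = some l := by
  induction r with
  | zero =>
    simp only [roundLabelling] at h
    split_ifs at h with hv
    cases h
    exact ⟨le_rfl, by simp [roundLabelling, hv]⟩
  | succ r ih =>
    rcases h₀ : g.roundLabelling r v with _ | l₀
    · have htime := (extendLabelling_eq_some h₀ h).1
      exact ⟨htime.le, htime ▸ h⟩
    · obtain rfl : l₀ = l := Option.some_injective _
        ((extendLabelling_of_eq_some h₀).symm.trans h)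
      exact ⟨(ih h₀).1.trans r.le_succ, (ih h₀).2⟩

theorem roundLabelling_unique {r' : ℕ} {l' : Label V} (h : g.roundLabelling r v = some l)
    (h' : g.roundLabelling r' v = some l') : l = l' :=
  Option.some_injective _ ((roundLabelling_mono h (le_max_left r r')).symm.trans
    (roundLabelling_mono h' (le_max_right r r')))

theorem roundLabelling_eq_none_of_lt (h : g.roundLabelling r v = some l) {r' : ℕ}
    (hr : r' < l.time) : g.roundLabelling r' v = none := by
  rcases h' : g.roundLabelling r' v with _ | l'
  · rfl
  · obtain rfl := roundLabelling_unique h h'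
    exact absurd (roundLabelling_time h').1 hr.not_ge

theorem exists_fresh_of_roundLabelling_eq_some (h : g.roundLabelling r v = some l)
    (hv : v ∉ g.totalTarget) : ∃ k, l.time = k + 1 ∧
      (∃ lu, g.FreshSucc (g.roundLabelling k) k v l.next lu ∧ lu.dest = l.dest) ∧
      (g.Favorable (g.owner v) l.dest ∨ ∀ u ∈ g.succ v, (g.roundLabelling k u).isSome) := by
  have hl := (roundLabelling_time h).2
  rcases htime : l.time with _ | k
  · rw [htime] at hl
    simp [roundLabelling, hv] at hl
  · rw [htime] at hl
    exact ⟨k, rfl, (extendLabelling_eq_some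
      (roundLabelling_eq_none_of_lt h (htime ▸ k.lt_succ_self)) hl).2⟩

theorem finalLabelling_eq_some_iff :
    g.finalLabelling v = some l ↔ ∃ r, g.roundLabelling r v = some l := by
  unfold finalLabelling
  split_ifs with h
  · refine ⟨fun hl => ⟨_, hl⟩, fun ⟨r, hl⟩ => ?_⟩
    obtain ⟨l', hl'⟩ := Option.isSome_iff_exists.mp h.choose_spec
    rw [hl', roundLabelling_unique hl hl']
  · simp only [false_iff]
    exact fun ⟨r, hl⟩ => h ⟨r, by simp [hl]⟩

end

theorem finalLabelling_favorable_of_succ {v u : V} {lu : Label V} (hv : v ∉ g.totalTarget)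
    (hu : u ∈ g.succ v) (hLu : g.finalLabelling u = some lu)
    (hfav : g.Favorable (g.owner v) lu.dest) :
    ∃ l, g.finalLabelling v = some l ∧ g.Favorable (g.owner v) l.dest ∧
      l.time ≤ lu.time + 1 := by
  obtain ⟨r, hr⟩ := finalLabelling_eq_some_iff.mp hLu
  have hu_fresh : g.FreshSucc (g.roundLabelling lu.time) lu.time v u lu :=
    ⟨hu, (roundLabelling_time hr).2, rfl⟩
  rcases hLv : g.roundLabelling lu.time v with _ | l
  · obtain ⟨l, hl, hlfav⟩ := extendLabelling_of_favorable hLv hu_fresh hfav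
    exact ⟨l, finalLabelling_eq_some_iff.mpr ⟨lu.time + 1, hl⟩, hlfav,
      (extendLabelling_eq_some hLv hl).1.le⟩
  have hl_time := (roundLabelling_time hLv).1
  refine ⟨l, finalLabelling_eq_some_iff.mpr ⟨_, hLv⟩, ?_, hl_time.trans lu.time.le_succ⟩
  -- An unfavourable label would need `u` labelled before `v`, but `l.time ≤ lu.time`.
  obtain ⟨k, hk, -, hfav_or_all⟩ := exists_fresh_of_roundLabelling_eq_some hLv hv
  refine hfav_or_all.resolve_right fun hall => ?_
  obtain ⟨lu', hlu'⟩ := Option.isSome_iff_exists.mp (hall u hu)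
  obtain rfl := roundLabelling_unique hr hlu'
  have := (roundLabelling_time hlu').1
  omega

theorem finalLabelling_succ_time_lt {v : V} {l : Label V} (hv : v ∉ g.totalTarget)
    (hLv : g.finalLabelling v = some l) (hfav : ¬ g.Favorable (g.owner v) l.dest) :
    ∀ u ∈ g.succ v, ∃ lu, g.finalLabelling u = some lu ∧ lu.time < l.time := by
  intro u hu
  obtain ⟨r, hr⟩ := finalLabelling_eq_some_iff.mp hLv
  obtain ⟨k, hk, -, hfav_or_all⟩ := exists_fresh_of_roundLabelling_eq_some hr hv
  obtain ⟨lu, hlu⟩ := Option.isSome_iff_exists.mp ((hfav_or_all.resolve_left hfav) u hu)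
  exact ⟨lu, finalLabelling_eq_some_iff.mpr ⟨k, hlu⟩,
    hk ▸ Nat.lt_succ_of_le (roundLabelling_time hlu).1⟩

theorem finalLabelling_exists_succ_eq_none {v : V} (hLv : g.finalLabelling v = none) :
    ∃ u ∈ g.succ v, g.finalLabelling u = none := by
  by_contra! hall
  -- Otherwise `v` is labelled one round after its latest-labelled successor.
  obtain ⟨u, hu, hmax⟩ := (g.succ v).exists_max_image
    (fun u => ((g.finalLabelling u).map Label.time).getD 0) (g.succ_nonempty v)
  obtain ⟨lu, hLu⟩ := Option.ne_none_iff_exists'.mp (hall u hu)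
  obtain ⟨-, hround⟩ := roundLabelling_time (finalLabelling_eq_some_iff.mp hLu).choose_spec
  have hall_round : ∀ u' ∈ g.succ v, (g.roundLabelling lu.time u').isSome := by
    intro u' hu'
    obtain ⟨lu', hLu'⟩ := Option.ne_none_iff_exists'.mp (hall u' hu')
    obtain ⟨-, hround'⟩ := roundLabelling_time (finalLabelling_eq_some_iff.mp hLu').choose_spec
    have hle : lu'.time ≤ lu.time := by simpa [hLu, hLu'] using hmax u' hu'
    simp [roundLabelling_mono hround' hle]
  have hv_round : g.roundLabelling lu.time v = none :=
    Option.eq_none_iff_forall_ne_some.mpr fun l hl =>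
      by simp [finalLabelling_eq_some_iff.mpr ⟨_, hl⟩] at hLv
  obtain ⟨l, hl⟩ := Option.isSome_iff_exists.mp
    (isSome_extendLabelling_of_forall hv_round hall_round ⟨hu, hround, rfl⟩)
  simp [finalLabelling_eq_some_iff.mpr ⟨lu.time + 1, hl⟩] at hLv

variable (g) in
theorem isEquilibriumLabelling_finalLabelling : g.IsEquilibriumLabelling g.finalLabelling where
  eq_of_mem_totalTarget hv := finalLabelling_eq_some_iff.mpr ⟨0, by simp [roundLabelling, hv]⟩
  next_mem hv hLv := by
    obtain ⟨r, hr⟩ := finalLabelling_eq_some_iff.mp hLv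
    obtain ⟨k, -, ⟨_, hfresh, -⟩, -⟩ := exists_fresh_of_roundLabelling_eq_some hr hv
    exact hfresh.1
  next_label hv hLv := by
    obtain ⟨r, hr⟩ := finalLabelling_eq_some_iff.mp hLv
    obtain ⟨k, hk, ⟨lu, ⟨-, hlu, hlu_time⟩, hdest⟩, -⟩ :=
      exists_fresh_of_roundLabelling_eq_some hr hv
    exact ⟨lu, finalLabelling_eq_some_iff.mpr ⟨k, hlu⟩, hdest, by omega⟩
  favorable_of_succ := finalLabelling_favorable_of_succ
  succ_time_lt := finalLabelling_succ_time_lt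
  exists_succ_eq_none := finalLabelling_exists_succ_eq_none

end MPRS

/-- Every quantitative MPRS game has a Nash equilibrium in deterministic
memoryless strategies. -/
theorem quantitative_MPRS_has_memoryless_NE
    {V : Type} [Fintype V] [DecidableEq V] {N : ℕ} (g : MPRS V N) :
    ∃ σhat : Fin N → MPRS.Strat V,
      (∀ n, g.ValidStrat n (σhat n)) ∧
      (∀ n, MPRS.Memoryless (σhat n)) ∧
      (∀ (n : Fin N) (s₀ : Option V) (σn : MPRS.Strat V), g.ValidStrat n σn →
        g.Q n s₀ (Function.update σhat n σn) ≤ g.Q n s₀ σhat) := by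
  have hL := g.isEquilibriumLabelling_finalLabelling
  refine ⟨g.labelProfile g.finalLabelling, fun n hist v _ hv => hL.labelMove_mem hv,
    fun n hist hist' v => rfl, fun n s₀ σn hσn => ?_⟩
  calc g.Q n s₀ (Function.update (g.labelProfile g.finalLabelling) n σn)
      ≤ g.labelValue g.finalLabelling n s₀ :=
        MPRS.Q_le_of_forall_add_mul_le (hL.add_mul_labelValue_step_update_le hσn) s₀
    _ = g.Q n s₀ (g.labelProfile g.finalLabelling) :=
        (MPRS.Q_eq_of_forall_add_mul_eq (hL.add_mul_labelValue_step_eq n) s₀).symm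
end

section
/- Every reach-a-set (RAS) game — a qualitative MPRS game in which every player is a reacher — has a Nash equilibrium in deterministic memoryless strategies: there exists a memoryless deterministic strategy profile σ̂ such that for every player n, every initial state s₀, and every (possibly history-dependent) deterministic strategy σ^n of player n, Q̃^n(s₀, σ̂^n, σ̂^{-n}) ≥ Q̃^n(s₀, σ^n, σ̂^{-n}), where here Q̃^n(s₀,σ) = 1 if the play induced by σ from s₀ contains a state of R_n and Q̃^n(s₀,σ) = 0 otherwise. -/
/-- The qualitative payoff of a reach-a-set (RAS) game: `1` if the induced play
contains a state of `Rₙ` and `0` otherwise. -/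
noncomputable def MPRS.Qras {V : Type} [Fintype V] [DecidableEq V] {N : ℕ}
    (g : MPRS V N) (n : Fin N) (s₀ : Option V) (σ : Fin N → MPRS.Strat V) : ℝ :=
  @ite ℝ (∃ (t : ℕ) (v : V), g.play σ s₀ t = some v ∧ v ∈ g.target n)
    (Classical.propDecidable _) 1 0

/-!
The equilibrium is built backwards from the targets. Vertices are settled one at a time,
each with a successor `c v`, the set `w v` of players that reach their target from `v`
by following `c`, and a rank `ρ v` that strictly decreases along `c` while `w v ≠ ∅`.
An unsettled vertex `v` is settled as soon as either some settled successor is winning for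
its owner (move there), or all its successors are settled and none is (the owner loses).
When no vertex qualifies, every unsettled vertex has an unsettled successor and no settled
successor winning for its owner, so the remaining vertices can circulate among themselves
forever and are labelled losing for everybody.

In the resulting memoryless profile no player `n` can profit from deviating: starting from a
vertex with `n ∉ w v`, every move of `n` and every move of `c` keeps `n ∉ w`, and targets
of `n` carry `n ∈ w`.
-/

namespace MPRS

variable {V : Type} [Fintype V] [DecidableEq V] {N : ℕ} (g : MPRS V N)

theorem Qras_nonneg (n : Fin N) (s₀ : Option V) (σ : Fin N → Strat V) : 0 ≤ g.Qras n s₀ σ := by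
  unfold Qras; split_ifs <;> norm_num

theorem Qras_le_one (n : Fin N) (s₀ : Option V) (σ : Fin N → Strat V) : g.Qras n s₀ σ ≤ 1 := by
  unfold Qras; split_ifs <;> norm_num

theorem play_invariant {σ : Fin N → Strat V} {P : Option V → Prop}
    (hstep : ∀ h s, P s → P (g.step σ h s)) {s₀ : Option V} (h₀ : P s₀) (t : ℕ) :
    P (g.play σ s₀ t) := by
  suffices ∀ t h s, P s → P (g.playAux σ t h s) from this t [] s₀ h₀
  intro t
  induction t with
  | zero => exact fun _ _ hs => hs
  | succ t ih => exact fun h s hs => ih _ _ (hstep h s hs)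

def profileOf (c : V → V) : Fin N → Strat V := fun _ _ v => c v

theorem playAux_profileOf_history (c : V → V) (t : ℕ) (h h' : List (Option V)) (s : Option V) :
    g.playAux (profileOf c) t h s = g.playAux (profileOf c) t h' s := by
  induction t generalizing h h' s with
  | zero => rfl
  | succ t ih =>
    have hstep : g.step (profileOf c) h s = g.step (profileOf c) h' s := by cases s <;> rfl
    simp only [playAux, hstep]
    exact ih _ _ _

theorem play_profileOf_succ (c : V → V) {v : V} (hv : v ∉ g.totalTarget) (t : ℕ) :
    g.play (profileOf c) (some v) (t + 1) = g.play (profileOf c) (some (c v)) t := by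
  simp only [play, playAux, step, if_neg hv]
  exact g.playAux_profileOf_history c t _ _ _

theorem mem_totalTarget {n : Fin N} {v : V} (hv : v ∈ g.target n) : v ∈ g.totalTarget :=
  Finset.mem_biUnion.mpr ⟨n, Finset.mem_univ n, hv⟩

/-- On the vertices of `D`: `w v` is the set of players reaching their target from `v`
along `c`, and `ρ` is a rank certifying this. -/
structure IsWinLabelling (D : Finset V) (c : V → V) (w : V → Set (Fin N)) (ρ : V → ℕ) :
    Prop where
  totalTarget_subset : g.totalTarget ⊆ D
  eq_of_mem_totalTarget : ∀ v ∈ g.totalTarget, w v = {n | v ∈ g.target n}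
  choice_mem_succ : ∀ v ∈ D, v ∉ g.totalTarget → c v ∈ g.succ v
  choice_mem : ∀ v ∈ D, v ∉ g.totalTarget → c v ∈ D
  choice_eq : ∀ v ∈ D, v ∉ g.totalTarget → w (c v) = w v
  rank_lt : ∀ v ∈ D, v ∉ g.totalTarget → (w v).Nonempty → ρ (c v) < ρ v
  stable : ∀ v ∈ D, v ∉ g.totalTarget → g.owner v ∉ w v →
    ∀ u ∈ g.succ v, u ∈ D ∧ g.owner v ∉ w u

theorem isWinLabelling_totalTarget :
    g.IsWinLabelling g.totalTarget id (fun v => {n | v ∈ g.target n}) (fun _ => 0) where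
  totalTarget_subset := subset_rfl
  eq_of_mem_totalTarget _ _ := rfl
  choice_mem_succ _ hv hv' := absurd hv hv'
  choice_mem _ hv hv' := absurd hv hv'
  choice_eq _ hv hv' := absurd hv hv'
  rank_lt _ hv hv' := absurd hv hv'
  stable _ hv hv' := absurd hv hv'

variable {g}

namespace IsWinLabelling

variable {D : Finset V} {c : V → V} {w : V → Set (Fin N)} {ρ : V → ℕ}

theorem insert (hl : g.IsWinLabelling D c w ρ) {v u₀ : V} (hv : v ∉ D) (hu₀ : u₀ ∈ g.succ v)
    (hu₀D : u₀ ∈ D) (hgood : g.owner v ∈ w u₀ ∨ ∀ u ∈ g.succ v, u ∈ D ∧ g.owner v ∉ w u) :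
    g.IsWinLabelling (insert v D) (Function.update c v u₀) (Function.update w v (w u₀))
      (Function.update ρ v (ρ u₀ + 1)) := by
  have hupd : ∀ {β : Type} (f : V → β) (b : β), ∀ x ∈ D, Function.update f v b x = f x :=
    fun f b x hx => Function.update_of_ne (ne_of_mem_of_not_mem hx hv) b f
  have hc := hupd c u₀
  have hw := hupd w (w u₀)
  have hρ := hupd ρ (ρ u₀ + 1)
  constructor
  · exact hl.totalTarget_subset.trans (Finset.subset_insert v D)
  · intro x hx
    rw [hw x (hl.totalTarget_subset hx)]
    exact hl.eq_of_mem_totalTarget x hx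
  · rintro x hx hxR
    rcases Finset.mem_insert.mp hx with rfl | hxD
    · simpa using hu₀
    · rw [hc x hxD]; exact hl.choice_mem_succ x hxD hxR
  · rintro x hx hxR
    rcases Finset.mem_insert.mp hx with rfl | hxD
    · simpa using Finset.mem_insert_of_mem hu₀D
    · rw [hc x hxD]; exact Finset.mem_insert_of_mem (hl.choice_mem x hxD hxR)
  · rintro x hx hxR
    rcases Finset.mem_insert.mp hx with rfl | hxD
    · simp [hw u₀ hu₀D]
    · rw [hc x hxD, hw x hxD, hw _ (hl.choice_mem x hxD hxR)]
      exact hl.choice_eq x hxD hxR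
  · rintro x hx hxR hwx
    rcases Finset.mem_insert.mp hx with rfl | hxD
    · simp [hρ u₀ hu₀D]
    · rw [hw x hxD] at hwx
      rw [hc x hxD, hρ x hxD, hρ _ (hl.choice_mem x hxD hxR)]
      exact hl.rank_lt x hxD hxR hwx
  · rintro x hx hxR hown u hu
    rcases Finset.mem_insert.mp hx with rfl | hxD
    · rw [Function.update_self] at hown
      obtain ⟨huD, hlose⟩ := hgood.resolve_left hown u hu
      exact ⟨Finset.mem_insert_of_mem huD, by rwa [hw u huD]⟩
    · rw [hw x hxD] at hown
      obtain ⟨huD, hlose⟩ := hl.stable x hxD hxR hown u hu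
      exact ⟨Finset.mem_insert_of_mem huD, by rwa [hw u huD]⟩

theorem exists_univ_of_closed (hl : g.IsWinLabelling D c w ρ)
    (hlose : ∀ v ∉ D, ∀ u ∈ g.succ v, u ∈ D → g.owner v ∉ w u)
    (hescape : ∀ v ∉ D, ∃ u ∈ g.succ v, u ∉ D) :
    ∃ c' w' ρ', g.IsWinLabelling Finset.univ c' w' ρ' := by
  choose e he_succ he_out using hescape
  refine ⟨fun x => if hx : x ∈ D then c x else e x hx, fun x => if x ∈ D then w x else ∅, ρ,
    ?_, ?_, ?_, ?_, ?_, ?_, ?_⟩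
  · exact Finset.subset_univ _
  · intro x hx
    simpa [hl.totalTarget_subset hx] using hl.eq_of_mem_totalTarget x hx
  · intro x _ hxR
    by_cases hxD : x ∈ D
    · simpa [hxD] using hl.choice_mem_succ x hxD hxR
    · simpa [hxD] using he_succ x hxD
  · exact fun x _ _ => Finset.mem_univ _
  · intro x _ hxR
    by_cases hxD : x ∈ D
    · simpa [hxD, hl.choice_mem x hxD hxR] using hl.choice_eq x hxD hxR
    · simp [hxD, he_out x hxD]
  · intro x _ hxR hwx
    by_cases hxD : x ∈ D
    · simp only [hxD, dite_true, if_true] at hwx ⊢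
      exact hl.rank_lt x hxD hxR hwx
    · simp [hxD] at hwx
  · intro x _ hxR hown u hu
    refine ⟨Finset.mem_univ _, ?_⟩
    by_cases hxD : x ∈ D
    · simp only [hxD, if_true] at hown
      simpa [(hl.stable x hxD hxR hown u hu).1] using (hl.stable x hxD hxR hown u hu).2
    · by_cases huD : u ∈ D
      · simpa [huD] using hlose x hxD u hu huD
      · simp [huD]

theorem exists_univ {D : Finset V} {c : V → V} {w : V → Set (Fin N)} {ρ : V → ℕ}
    (hl : g.IsWinLabelling D c w ρ) :
    ∃ c' w' ρ', g.IsWinLabelling Finset.univ c' w' ρ' := by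
  by_cases hext : ∃ v ∉ D, ∃ u ∈ g.succ v, u ∈ D ∧
      (g.owner v ∈ w u ∨ ∀ u' ∈ g.succ v, u' ∈ D ∧ g.owner v ∉ w u')
  · obtain ⟨v, hv, u, hu, huD, hgood⟩ := hext
    exact (hl.insert hv hu huD hgood).exists_univ
  · have hlose : ∀ v ∉ D, ∀ u ∈ g.succ v, u ∈ D → g.owner v ∉ w u :=
      fun v hv u hu huD hwin => hext ⟨v, hv, u, hu, huD, Or.inl hwin⟩
    refine hl.exists_univ_of_closed hlose fun v hv => ?_
    by_contra! hall
    obtain ⟨u, hu⟩ := g.succ_nonempty v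
    exact hext ⟨v, hv, u, hu, hall u hu,
      Or.inr fun u' hu' => ⟨hall u' hu', hlose v hv u' hu' (hall u' hu')⟩⟩
termination_by Dᶜ.card
decreasing_by
  rw [Finset.compl_insert]
  exact Finset.card_erase_lt_of_mem (Finset.mem_compl.mpr hv)

theorem reaches (hl : g.IsWinLabelling Finset.univ c w ρ) {n : Fin N} {v : V} (hn : n ∈ w v) :
    ∃ (t : ℕ) (u : V), g.play (profileOf c) (some v) t = some u ∧ u ∈ g.target n := by
  induction hk : ρ v using Nat.strong_induction_on generalizing v with
  | _ k ih =>
    by_cases hvR : v ∈ g.totalTarget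
    · rw [hl.eq_of_mem_totalTarget v hvR] at hn
      exact ⟨0, v, rfl, hn⟩
    · have hn' : n ∈ w (c v) := by rwa [hl.choice_eq v (Finset.mem_univ v) hvR]
      obtain ⟨t, u, hplay, hu⟩ :=
        ih _ (hk ▸ hl.rank_lt v (Finset.mem_univ v) hvR ⟨n, hn⟩) hn' rfl
      exact ⟨t + 1, u, by rw [g.play_profileOf_succ c hvR]; exact hplay, hu⟩

theorem not_reaches_of_update (hl : g.IsWinLabelling Finset.univ c w ρ) {n : Fin N}
    {σn : Strat V} (hσn : g.ValidStrat n σn) {s₀ : Option V} (hs₀ : ∀ v ∈ s₀, n ∉ w v) :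
    ¬ ∃ (t : ℕ) (u : V), g.play (Function.update (profileOf c) n σn) s₀ t = some u ∧
      u ∈ g.target n := by
  rintro ⟨t, u, hplay, hu⟩
  refine g.play_invariant (P := fun s => ∀ v ∈ s, n ∉ w v) ?_ hs₀ t u hplay ?_
  · rintro h (_ | v) hs x hx
    · cases hx
    by_cases hvR : v ∈ g.totalTarget
    · simp [step, hvR] at hx
    simp only [step, if_neg hvR, Option.mem_def, Option.some.injEq] at hx
    subst hx
    by_cases hown : g.owner v = n
    · rw [hown, Function.update_self]
      exact hown ▸ (hl.stable v (Finset.mem_univ v) hvR (hown ▸ hs v rfl) _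
        (hσn h v hown hvR)).2
    · rw [Function.update_of_ne hown, profileOf, hl.choice_eq v (Finset.mem_univ v) hvR]
      exact hs v rfl
  · rw [hl.eq_of_mem_totalTarget u (g.mem_totalTarget hu)]
    exact hu

end IsWinLabelling

end MPRS

theorem RAS_has_memoryless_NE_general
    {V : Type} [Fintype V] [DecidableEq V] {N : ℕ} (g : MPRS V N) :
    ∃ σhat : Fin N → MPRS.Strat V,
      (∀ n, g.ValidStrat n (σhat n)) ∧
      (∀ n, MPRS.Memoryless (σhat n)) ∧
      (∀ (n : Fin N) (s₀ : Option V) (σn : MPRS.Strat V), g.ValidStrat n σn →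
        g.Qras n s₀ (Function.update σhat n σn) ≤ g.Qras n s₀ σhat) := by
  obtain ⟨c, w, ρ, hl⟩ := g.isWinLabelling_totalTarget.exists_univ
  refine ⟨MPRS.profileOf c, fun _ _ v _ hv => hl.choice_mem_succ v (Finset.mem_univ v) hv,
    fun _ _ _ _ => rfl, fun n s₀ σn hσn => ?_⟩
  by_cases hwin : ∃ v ∈ s₀, n ∈ w v
  · obtain ⟨v, hv, hn⟩ := hwin
    rw [Option.mem_def.mp hv]
    exact (g.Qras_le_one _ _ _).trans_eq (if_pos (hl.reaches hn)).symm
  · push Not at hwin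
    exact (if_neg (hl.not_reaches_of_update hσn hwin)).trans_le (g.Qras_nonneg _ _ _)

/-- Every reach-a-set (RAS) game — a qualitative MPRS game in which every
player is a reacher — has a Nash equilibrium in deterministic memoryless
strategies. -/
theorem RAS_has_memoryless_NE
    {V : Type} [Fintype V] [DecidableEq V] {N : ℕ} (g : MPRS V N)
    (hras : ∀ n : Fin N, g.reacher n = true) :
    ∃ σhat : Fin N → MPRS.Strat V,
      (∀ n, g.ValidStrat n (σhat n)) ∧
      (∀ n, MPRS.Memoryless (σhat n)) ∧
      (∀ (n : Fin N) (s₀ : Option V) (σn : MPRS.Strat V), g.ValidStrat n σn →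
        g.Qras n s₀ (Function.update σhat n σn) ≤ g.Qras n s₀ σhat) :=
  RAS_has_memoryless_NE_general g
end

section
/- Every two-player reachability/safety game — a qualitative MPRS game with N = 2, player 1 a reacher with nonempty target set R₁, and player 2 an avoider with target set R₂ = R₁ — has a Nash equilibrium in deterministic memoryless strategies: there exists a memoryless deterministic strategy profile σ̂ = (σ̂^1, σ̂^2) such that for every player n ∈ {1,2}, every initial state s₀, and every (possibly history-dependent) deterministic strategy σ^n of player n, Q̃^n(s₀, σ̂^n, σ̂^{-n}) ≥ Q̃^n(s₀, σ^n, σ̂^{-n}), where Q̃^1(s₀,σ) = 1 if the play induced by σ from s₀ contains a state of R₁ and 0 otherwise, and Q̃^2(s₀,σ) = −1 if the play contains a state of R₁ and 0 otherwise. -/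
/-- The qualitative payoff of a two-player reachability/safety game: player `0`
(the reacher) gets `1` if the induced play contains a state of `R₁` and `0`
otherwise; player `1` (the avoider) gets `-1` if the play contains a state of
`R₁` and `0` otherwise.  (Here `R₂ = R₁`.) -/
noncomputable def MPRS.Qtwo {V : Type} [Fintype V] [DecidableEq V]
    (g : MPRS V 2) (n : Fin 2) (s₀ : Option V) (σ : Fin 2 → MPRS.Strat V) : ℝ :=
  @ite ℝ (∃ (t : ℕ) (v : V), g.play σ s₀ t = some v ∧ v ∈ g.target n)
    (Classical.propDecidable _) (if n = 0 then 1 else -1) 0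


/-!
The reacher's attractor `W` of the target set `R` is the union of the levels `A₀ = R`,
`A_{k+1} = A_k ∪ {reacher vertices with a successor in A_k} ∪ {other vertices all of whose
successors lie in A_k}`. From `A_k`, always moving to a successor of least level forces a visit
to `R` within `k` steps whatever the opponent does. Off `W`, every reacher move stays off `W`
and the avoider can always stay off `W`, which contains `R`. These two memoryless strategies
form an equilibrium: from every initial state one of the players already gets the best payoff
available to them against the other's strategy.
-/

namespace MPRS

variable {V : Type} [Fintype V] [DecidableEq V] {N : ℕ} (g : MPRS V N)

noncomputable def succWith (P : V → Prop) (v : V) : V :=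
  open Classical in
  if h : ∃ w ∈ g.succ v, P w then h.choose else (g.succ_nonempty v).choose

theorem succWith_mem_succ (P : V → Prop) (v : V) : g.succWith P v ∈ g.succ v := by
  unfold succWith
  split_ifs with h
  exacts [h.choose_spec.1, (g.succ_nonempty v).choose_spec]

theorem succWith_spec {P : V → Prop} {v w : V} (hw : w ∈ g.succ v) (hP : P w) :
    P (g.succWith P v) := by
  have h : ∃ w ∈ g.succ v, P w := ⟨w, hw, hP⟩
  simpa only [succWith, dif_pos h] using h.choose_spec.2

def attractor (p : Fin N) : ℕ → Set V
  | 0 => g.totalTarget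
  | k + 1 => attractor p k ∪ {v | (g.owner v = p ∧ ∃ w ∈ g.succ v, w ∈ attractor p k) ∨
      (g.owner v ≠ p ∧ ∀ w ∈ g.succ v, w ∈ attractor p k)}

def winningRegion (p : Fin N) : Set V := ⋃ k, g.attractor p k

variable {g} {p : Fin N}

theorem attractor_mono : Monotone (g.attractor p) :=
  monotone_nat_of_le_succ fun _ => Set.subset_union_left

theorem attractor_subset_winningRegion (k : ℕ) : g.attractor p k ⊆ g.winningRegion p :=
  Set.subset_iUnion (g.attractor p) k

theorem totalTarget_subset_winningRegion : ↑g.totalTarget ⊆ g.winningRegion p :=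
  attractor_subset_winningRegion 0

theorem mem_winningRegion_of_owner_eq {v w : V} (hv : g.owner v = p) (hw : w ∈ g.succ v)
    (hwW : w ∈ g.winningRegion p) : v ∈ g.winningRegion p := by
  obtain ⟨k, hk⟩ := Set.mem_iUnion.1 hwW
  exact attractor_subset_winningRegion (k + 1) (Or.inr (Or.inl ⟨hv, w, hw, hk⟩))

theorem mem_winningRegion_of_owner_ne {v : V} (hv : g.owner v ≠ p)
    (hW : ∀ w ∈ g.succ v, w ∈ g.winningRegion p) : v ∈ g.winningRegion p := by
  choose! level hlevel using fun w hw => Set.mem_iUnion.1 (hW w hw)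
  -- a common level for the finitely many successors
  have hall : ∀ w ∈ g.succ v, w ∈ g.attractor p ((g.succ v).sup level) := fun w hw =>
    attractor_mono (Finset.le_sup hw) (hlevel w hw)
  exact attractor_subset_winningRegion (_ + 1) (Or.inr (Or.inr ⟨hv, hall⟩))

variable (g p)

noncomputable def succLevel (v : V) : ℕ :=
  sInf {k | ∃ w ∈ g.succ v, w ∈ g.attractor p k}

noncomputable def attractorStrategy : Strat V :=
  fun _ v => g.succWith (· ∈ g.attractor p (g.succLevel p v)) v

noncomputable def trapStrategy : Strat V :=
  fun _ => g.succWith (· ∉ g.winningRegion p)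

variable {g p}

theorem validStrat_attractorStrategy (n : Fin N) : g.ValidStrat n (g.attractorStrategy p) :=
  fun _ v _ _ => g.succWith_mem_succ _ v

theorem validStrat_trapStrategy (n : Fin N) : g.ValidStrat n (g.trapStrategy p) :=
  fun _ v _ _ => g.succWith_mem_succ _ v

theorem attractorStrategy_mem_attractor {h : List (Option V)} {v w : V} {k : ℕ}
    (hw : w ∈ g.succ v) (hwk : w ∈ g.attractor p k) :
    g.attractorStrategy p h v ∈ g.attractor p k := by
  have hk : k ∈ {k | ∃ w ∈ g.succ v, w ∈ g.attractor p k} := ⟨w, hw, hwk⟩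
  obtain ⟨w', hw', hw'k⟩ := Nat.sInf_mem ⟨k, hk⟩
  exact attractor_mono (Nat.sInf_le hk) (g.succWith_spec hw' hw'k)

theorem trapStrategy_not_mem_winningRegion {h : List (Option V)} {v w : V}
    (hw : w ∈ g.succ v) (hwW : w ∉ g.winningRegion p) :
    g.trapStrategy p h v ∉ g.winningRegion p :=
  g.succWith_spec (P := (· ∉ g.winningRegion p)) hw hwW

variable (g)

def HitsTarget (σ : Fin N → Strat V) (h : List (Option V)) (s : Option V) : Prop :=
  ∃ t v, g.playAux σ t h s = some v ∧ v ∈ g.totalTarget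

variable {g}

theorem playAux_succ_some {σ : Fin N → Strat V} {h : List (Option V)} {v : V} (t : ℕ)
    (hv : v ∉ g.totalTarget) :
    g.playAux σ (t + 1) h (some v) = g.playAux σ t (h ++ [some v]) (some (σ (g.owner v) h v)) := by
  simp only [playAux, step, if_neg hv]

theorem playAux_none (σ : Fin N → Strat V) (t : ℕ) (h : List (Option V)) :
    g.playAux σ t h none = none := by
  induction t generalizing h with
  | zero => rfl
  | succ t ih => exact ih _

theorem hitsTarget_of_step {σ : Fin N → Strat V} {h : List (Option V)} {v : V}
    (hv : v ∉ g.totalTarget) (hnext : g.HitsTarget σ (h ++ [some v]) (some (σ (g.owner v) h v))) :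
    g.HitsTarget σ h (some v) :=
  let ⟨t, u, hplay, hu⟩ := hnext
  ⟨t + 1, u, (playAux_succ_some t hv).trans hplay, hu⟩

theorem not_hitsTarget_none (σ : Fin N → Strat V) (h : List (Option V)) :
    ¬ g.HitsTarget σ h none := by
  rintro ⟨t, v, hplay, -⟩
  simp [playAux_none] at hplay

theorem hitsTarget_of_mem_attractor {σ : Fin N → Strat V} (hσp : σ p = g.attractorStrategy p)
    (hσ : ∀ q ≠ p, g.ValidStrat q (σ q)) {k : ℕ} {v : V} (hv : v ∈ g.attractor p k)
    (h : List (Option V)) : g.HitsTarget σ h (some v) := by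
  induction k generalizing v h with
  | zero => exact ⟨0, v, rfl, hv⟩
  | succ k ih =>
    by_cases hR : v ∈ g.totalTarget
    · exact ⟨0, v, rfl, hR⟩
    rcases hv with hv | ⟨hown, w, hw, hwk⟩ | ⟨hown, hall⟩
    · exact ih hv h
    · refine hitsTarget_of_step hR (ih ?_ _)
      rw [hown, hσp]
      exact attractorStrategy_mem_attractor hw hwk
    · exact hitsTarget_of_step hR (ih (hall _ (hσ _ hown h v rfl hR)) _)

theorem not_hitsTarget_of_invariant {σ : Fin N → Strat V} {S : Set V}
    (hST : ∀ v ∈ S, v ∉ g.totalTarget) (hS : ∀ h v, v ∈ S → σ (g.owner v) h v ∈ S) {v : V}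
    (hv : v ∈ S) (h : List (Option V)) : ¬ g.HitsTarget σ h (some v) := by
  rintro ⟨t, u, hplay, hu⟩
  induction t generalizing v h with
  | zero => exact hST v hv (Option.some.inj hplay ▸ hu)
  | succ t ih =>
    rw [playAux_succ_some t (hST v hv)] at hplay
    exact ih (hS h v hv) _ hplay

theorem not_hitsTarget_of_not_mem_winningRegion {σ : Fin N → Strat V}
    (hσp : g.ValidStrat p (σ p)) (hσ : ∀ q ≠ p, σ q = g.trapStrategy p) {v : V}
    (hv : v ∉ g.winningRegion p) (h : List (Option V)) : ¬ g.HitsTarget σ h (some v) := by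
  have hST : ∀ v ∉ g.winningRegion p, v ∉ g.totalTarget := fun v hv hR =>
    hv (totalTarget_subset_winningRegion hR)
  refine not_hitsTarget_of_invariant hST (fun h v hv => ?_) hv h
  by_cases hown : g.owner v = p
  · have hsucc : σ (g.owner v) h v ∈ g.succ v := hown ▸ hσp h v hown (hST v hv)
    exact fun hW => hv (mem_winningRegion_of_owner_eq hown hsucc hW)
  · obtain ⟨w, hw, hwW⟩ : ∃ w ∈ g.succ v, w ∉ g.winningRegion p := by
      by_contra! hall
      exact hv (mem_winningRegion_of_owner_ne hown hall)
    rw [hσ _ hown]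
    exact trapStrategy_not_mem_winningRegion hw hwW

/-- The saddle-point property of the attractor and trap strategies. -/
theorem hitsTarget_of_hitsTarget_trapStrategy {σ τ : Fin N → Strat V}
    (hσp : g.ValidStrat p (σ p)) (hσ : ∀ q ≠ p, σ q = g.trapStrategy p)
    (hτp : τ p = g.attractorStrategy p) (hτ : ∀ q ≠ p, g.ValidStrat q (τ q))
    {s : Option V} {h h' : List (Option V)} (hit : g.HitsTarget σ h s) :
    g.HitsTarget τ h' s := by
  cases s with
  | none => exact absurd hit (not_hitsTarget_none σ h)
  | some v =>
    by_cases hv : v ∈ g.winningRegion p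
    · obtain ⟨k, hk⟩ := Set.mem_iUnion.1 hv
      exact hitsTarget_of_mem_attractor hτp hτ hk h'
    · exact absurd hit (not_hitsTarget_of_not_mem_winningRegion hσp hσ hv h)

section TwoPlayers

variable {g : MPRS V 2}

theorem totalTarget_eq_target (htar : g.target 1 = g.target 0) (n : Fin 2) :
    g.totalTarget = g.target n := by
  ext v
  fin_cases n <;> simp [totalTarget, Fin.exists_fin_two, htar]

theorem exists_play_mem_target_iff (htar : g.target 1 = g.target 0) (n : Fin 2)
    (σ : Fin 2 → Strat V) (s : Option V) :
    (∃ t v, g.play σ s t = some v ∧ v ∈ g.target n) ↔ g.HitsTarget σ [] s := by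
  rw [← totalTarget_eq_target htar n]
  rfl

theorem Qtwo_zero_le_Qtwo_zero (htar : g.target 1 = g.target 0) {σ τ : Fin 2 → Strat V}
    {s : Option V} (hst : g.HitsTarget σ [] s → g.HitsTarget τ [] s) :
    g.Qtwo 0 s σ ≤ g.Qtwo 0 s τ := by
  unfold Qtwo
  rw [exists_play_mem_target_iff htar, exists_play_mem_target_iff htar]
  split_ifs <;> simp_all

theorem Qtwo_one_le_Qtwo_one (htar : g.target 1 = g.target 0) {σ τ : Fin 2 → Strat V}
    {s : Option V} (hts : g.HitsTarget τ [] s → g.HitsTarget σ [] s) :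
    g.Qtwo 1 s σ ≤ g.Qtwo 1 s τ := by
  unfold Qtwo
  rw [exists_play_mem_target_iff htar, exists_play_mem_target_iff htar]
  split_ifs <;> simp_all

end TwoPlayers

end MPRS

open MPRS in
theorem two_player_reachability_safety_has_memoryless_NE_general
    {V : Type} [Fintype V] [DecidableEq V] (g : MPRS V 2)
    (htar : g.target 1 = g.target 0) :
    ∃ σhat : Fin 2 → MPRS.Strat V,
      (∀ n, g.ValidStrat n (σhat n)) ∧
      (∀ n, MPRS.Memoryless (σhat n)) ∧
      (∀ (n : Fin 2) (s₀ : Option V) (σn : MPRS.Strat V), g.ValidStrat n σn →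
        g.Qtwo n s₀ (Function.update σhat n σn) ≤ g.Qtwo n s₀ σhat) := by
  refine ⟨![g.attractorStrategy 0, g.trapStrategy 0],
    Fin.forall_fin_two.2 ⟨validStrat_attractorStrategy 0, validStrat_trapStrategy 1⟩,
    Fin.forall_fin_two.2 ⟨fun _ _ _ => rfl, fun _ _ _ => rfl⟩, ?_⟩
  refine Fin.forall_fin_two.2 ⟨fun s₀ σn hσn => ?_, fun s₀ σn hσn => ?_⟩
  · refine Qtwo_zero_le_Qtwo_zero htar (hitsTarget_of_hitsTarget_trapStrategy (p := 0) ?_ ?_ ?_ ?_)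
    · simpa using hσn
    · exact Fin.forall_fin_two.2 ⟨fun h => absurd rfl h, fun _ => rfl⟩
    · rfl
    · exact Fin.forall_fin_two.2 ⟨fun h => absurd rfl h, fun _ => validStrat_trapStrategy 1⟩
  · refine Qtwo_one_le_Qtwo_one htar (hitsTarget_of_hitsTarget_trapStrategy (p := 0) ?_ ?_ ?_ ?_)
    · exact validStrat_attractorStrategy 0
    · exact Fin.forall_fin_two.2 ⟨fun h => absurd rfl h, fun _ => rfl⟩
    · rfl
    · exact Fin.forall_fin_two.2 ⟨fun h => absurd rfl h, fun _ => by simpa using hσn⟩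

/-- Every two-player reachability/safety game — a qualitative MPRS game with
`N = 2`, player `0` a reacher, player `1` an avoider and `R₂ = R₁` — has a Nash
equilibrium in deterministic memoryless strategies. -/
theorem two_player_reachability_safety_has_memoryless_NE
    {V : Type} [Fintype V] [DecidableEq V] (g : MPRS V 2)
    (h1 : g.reacher 0 = true) (h2 : g.reacher 1 = false)
    (htar : g.target 1 = g.target 0) :
    ∃ σhat : Fin 2 → MPRS.Strat V,
      (∀ n, g.ValidStrat n (σhat n)) ∧
      (∀ n, MPRS.Memoryless (σhat n)) ∧
      (∀ (n : Fin 2) (s₀ : Option V) (σn : MPRS.Strat V), g.ValidStrat n σn →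
        g.Qtwo n s₀ (Function.update σhat n σn) ≤ g.Qtwo n s₀ σhat) :=
  two_player_reachability_safety_has_memoryless_NE_general g htar
end
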